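/- Let n be a positive integer. The ratio of Abelian integrals A_n(h)/A_0(h) tends to n+1 as h tends to p₁ from the right, and tends to 2(n+1)(n+2)/(3n+4) as h tends to 0 from the left. -/

import Mathlib

/-!
Near `p₁` the oval `[α h, β h]` shrinks to the minimum point `a` of `Φ`, and `A_n / A_0` is a
weighted mean of `u ^ n` over the oval, so it tends to `a ^ n = n + 1`.

Near `0`, reading `√` of a negative number as `0`, the integrand of `A_m h` vanishes on `[0, B]`
outside the oval, so `A_m` is continuous at `0` with value an integral over `[0, B]`. There
`-2 Φ u = u ^ 2 (1 - u ^ n / B ^ n)`, and integrating the derivative of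
`u ^ 2 (1 - u ^ n / B ^ n) ^ (3 / 2)`, which vanishes at `0` and `B`, gives
`A_n 0 = 2 (n + 1) (n + 2) / (3 n + 4) · A_0 0`.
-/

open Set Filter Topology intervalIntegral
open MeasureTheory (volume)

theorem StrictMonoOn.tendsto_of_tendsto_comp {α β ι : Type*} [LinearOrder α] [TopologicalSpace α]
    [OrderTopology α] [LinearOrder β] [TopologicalSpace β] [OrderTopology β]
    {f : α → β} {s : Set α} (hf : StrictMonoOn f s) (hs : s.OrdConnected) {c : α} (hc : c ∈ s)
    {l : Filter ι} {g : ι → α} (hg : ∀ᶠ i in l, g i ∈ s)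
    (hfg : Tendsto (fun i => f (g i)) l (𝓝 (f c))) : Tendsto g l (𝓝 c) := by
  refine tendsto_order.2 ⟨fun b hb => ?_, fun b hb => ?_⟩
  · by_cases hbs : b ∈ s
    · filter_upwards [hg, (tendsto_order.1 hfg).1 _ (hf hbs hc hb)] with i hgi hfgi
      exact (hf.lt_iff_lt hbs hgi).1 hfgi
    · filter_upwards [hg] with i hgi
      by_contra! hle
      exact hbs (hs.out hgi hc ⟨hle, hb.le⟩)
  · by_cases hbs : b ∈ s
    · filter_upwards [hg, (tendsto_order.1 hfg).2 _ (hf hc hbs hb)] with i hgi hfgi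
      exact (hf.lt_iff_lt hgi hbs).1 hfgi
    · filter_upwards [hg] with i hgi
      by_contra! hle
      exact hbs (hs.out hc hgi ⟨hb.le, hle⟩)

theorem StrictAntiOn.tendsto_of_tendsto_comp {α β ι : Type*} [LinearOrder α] [TopologicalSpace α]
    [OrderTopology α] [LinearOrder β] [TopologicalSpace β] [OrderTopology β]
    {f : α → β} {s : Set α} (hf : StrictAntiOn f s) (hs : s.OrdConnected) {c : α} (hc : c ∈ s)
    {l : Filter ι} {g : ι → α} (hg : ∀ᶠ i in l, g i ∈ s)
    (hfg : Tendsto (fun i => f (g i)) l (𝓝 (f c))) : Tendsto g l (𝓝 c) :=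
  hf.dual_right.tendsto_of_tendsto_comp hs hc hg hfg

theorem div_integral_pow_mul_mem_Icc {w : ℝ → ℝ} {x y : ℝ} (hx : 0 ≤ x) (hxy : x ≤ y)
    (hw : ∀ u ∈ Icc x y, 0 ≤ w u) (hwi : IntervalIntegrable w volume x y)
    (hpos : 0 < ∫ u in x..y, w u) (n : ℕ) :
    (∫ u in x..y, u ^ n * w u) / (∫ u in x..y, w u) ∈ Icc (x ^ n) (y ^ n) := by
  have hpowi : IntervalIntegrable (fun u => u ^ n * w u) volume x y :=
    hwi.continuousOn_mul (continuous_pow n).continuousOn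
  rw [mem_Icc, le_div_iff₀ hpos, div_le_iff₀ hpos, ← integral_const_mul, ← integral_const_mul]
  constructor
  · refine integral_mono_on hxy (hwi.const_mul _) hpowi fun u hu => ?_
    exact mul_le_mul_of_nonneg_right (pow_le_pow_left₀ hx hu.1 n) (hw u hu)
  · refine integral_mono_on hxy hpowi (hwi.const_mul _) fun u hu => ?_
    exact mul_le_mul_of_nonneg_right (pow_le_pow_left₀ (hx.trans hu.1) hu.2 n) (hw u hu)

theorem integral_pow_succ_mul_sqrt_one_sub {n : ℕ} (hn : n ≠ 0) {B : ℝ} (hB : 0 < B) :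
    ∫ u in (0 : ℝ)..B, u ^ (n + 1) * √(1 - u ^ n / B ^ n)
      = 4 * B ^ n / (3 * n + 4) * ∫ u in (0 : ℝ)..B, u * √(1 - u ^ n / B ^ n) := by
  obtain ⟨k, rfl⟩ : ∃ k, n = k + 1 := ⟨n - 1, by omega⟩
  set G : ℝ → ℝ := fun u => 1 - u ^ (k + 1) / B ^ (k + 1) with hG
  have hBk : (0 : ℝ) < B ^ (k + 1) := by positivity
  set c : ℝ := (3 * ((k + 1 : ℕ) : ℝ) + 4) / (2 * B ^ (k + 1))
  have hF : ∀ u, HasDerivAt (fun u => u ^ 2 * G u ^ (3 / 2 : ℝ))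
      (2 * u * G u ^ (3 / 2 : ℝ)
        + u ^ 2 * (-((k + 1) * u ^ k / B ^ (k + 1)) * (3 / 2) * G u ^ ((3 / 2 : ℝ) - 1))) u := by
    intro u
    have hGd : HasDerivAt G (-((k + 1) * u ^ k / B ^ (k + 1))) u := by
      simpa using ((hasDerivAt_pow (k + 1) u).div_const (B ^ (k + 1))).const_sub 1
    refine ((hasDerivAt_pow 2 u).mul
      (hGd.rpow_const (p := 3 / 2) (Or.inr (by norm_num)))).congr_deriv ?_
    norm_num
  have hF' : ∀ u ∈ Ioo 0 B, HasDerivAt (fun u => u ^ 2 * G u ^ (3 / 2 : ℝ))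
      (2 * (u ^ 1 * √(G u)) - c * (u ^ (k + 2) * √(G u))) u := by
    intro u hu
    have hGu : 0 ≤ G u := sub_nonneg.2 <|
      div_le_one_of_le₀ (pow_le_pow_left₀ hu.1.le hu.2.le _) hBk.le
    have h32 : G u ^ (3 / 2 : ℝ) = G u * √(G u) := by
      rw [Real.sqrt_eq_rpow, ← Real.rpow_one_add' hGu (by norm_num)]
      norm_num
    have h12 : G u ^ ((3 / 2 : ℝ) - 1) = √(G u) := by
      rw [Real.sqrt_eq_rpow]
      norm_num
    refine (hF u).congr_deriv ?_
    rw [h32, h12]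
    set s := √(G u)
    simp only [hG, c]
    push_cast
    field_simp
    ring
  have hint : ∀ j : ℕ, IntervalIntegrable (fun u => u ^ j * √(G u)) volume 0 B :=
    fun j => (by fun_prop : Continuous fun u => u ^ j * √(G u)).intervalIntegrable 0 B
  have hibp := integral_eq_sub_of_hasDerivAt_of_le hB.le
    (fun u _ => (hF u).continuousAt.continuousWithinAt) hF'
    (((hint 1).const_mul 2).sub ((hint (k + 2)).const_mul c))
  have hGB : G B = 0 := by simp [hG, hBk.ne']
  rw [hGB, Real.zero_rpow (by norm_num), integral_sub ((hint 1).const_mul 2)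
    ((hint (k + 2)).const_mul _), integral_const_mul, integral_const_mul] at hibp
  simp only [pow_one, hG, c] at hibp
  field_simp at hibp ⊢
  linarith

noncomputable def potential (n : ℕ) (u : ℝ) : ℝ :=
  -u ^ 2 / 2 + u ^ (n + 2) / (((n : ℝ) + 1) * ((n : ℝ) + 2))

@[fun_prop]
theorem continuous_potential (n : ℕ) : Continuous (potential n) := by
  unfold potential
  fun_prop

theorem hasDerivAt_potential (n : ℕ) (u : ℝ) :
    HasDerivAt (potential n) (u * (u ^ n - ((n : ℝ) + 1)) / ((n : ℝ) + 1)) u := by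
  refine (((hasDerivAt_pow 2 u).neg.div_const 2).add
    ((hasDerivAt_pow (n + 2) u).div_const (((n : ℝ) + 1) * ((n : ℝ) + 2)))).congr_deriv ?_
  rw [show n + 2 - 1 = n + 1 by omega]
  push_cast
  field_simp
  ring

theorem potential_zero (n : ℕ) : potential n 0 = 0 := by
  simp [potential]

theorem potential_eq_of_pow_eq {n : ℕ} {a : ℝ} (han : a ^ n = n + 1) :
    potential n a = -n * a ^ 2 / (2 * (n + 2)) := by
  rw [potential, pow_add, han]
  field_simp
  ring

theorem neg_two_mul_potential {n : ℕ} {B : ℝ} (hBn : B ^ n = (n + 1) * (n + 2) / 2) (u : ℝ) :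
    -2 * potential n u = u ^ 2 * (1 - u ^ n / B ^ n) := by
  rw [potential, hBn, pow_add]
  field_simp
  ring

theorem potential_neg_of_pow_eq {n : ℕ} (hn : n ≠ 0) {a : ℝ} (ha : 0 < a)
    (han : a ^ n = n + 1) : potential n a < 0 := by
  rw [potential_eq_of_pow_eq han]
  have : (0 : ℝ) < n := by positivity
  have : 0 < (n : ℝ) * a ^ 2 := by positivity
  exact div_neg_of_neg_of_pos (by linarith) (by positivity)

theorem potential_eq_zero_of_pow_eq {n : ℕ} {B : ℝ} (hB : B ≠ 0)
    (hBn : B ^ n = (n + 1) * (n + 2) / 2) : potential n B = 0 := by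
  have := neg_two_mul_potential hBn B
  rw [div_self (pow_ne_zero n hB), sub_self, mul_zero] at this
  linarith

theorem potential_strictAntiOn {n : ℕ} (hn : n ≠ 0) {a : ℝ} (han : a ^ n = n + 1) :
    StrictAntiOn (potential n) (Icc 0 a) := by
  refine strictAntiOn_of_deriv_neg (convex_Icc 0 a) (continuous_potential n).continuousOn
    fun u hu => ?_
  rw [interior_Icc] at hu
  have hun : u ^ n < n + 1 := han ▸ pow_lt_pow_left₀ hu.2 hu.1.le hn
  rw [(hasDerivAt_potential n u).deriv]
  exact div_neg_of_neg_of_pos (mul_neg_of_pos_of_neg hu.1 (by linarith)) (by positivity)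

theorem potential_strictMonoOn {n : ℕ} (hn : n ≠ 0) {a : ℝ} (ha : 0 ≤ a) (han : a ^ n = n + 1) :
    StrictMonoOn (potential n) (Ici a) := by
  refine strictMonoOn_of_deriv_pos (convex_Ici a) (continuous_potential n).continuousOn
    fun u hu => ?_
  rw [interior_Ici] at hu
  have hun : n + 1 < u ^ n := han ▸ pow_lt_pow_left₀ hu ha hn
  rw [(hasDerivAt_potential n u).deriv]
  exact div_pos (mul_pos (ha.trans_lt hu) (by linarith)) (by positivity)

noncomputable def abelIntegral (n m : ℕ) (x y h : ℝ) : ℝ :=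
  2 * ∫ u in x..y, u ^ m * √(2 * (h - potential n u))

theorem continuous_abelIntegral (n m : ℕ) (x y : ℝ) :
    Continuous fun h => abelIntegral n m x y h := by
  unfold abelIntegral
  fun_prop

theorem intervalIntegrable_abelIntegrand (n m : ℕ) (h x y : ℝ) :
    IntervalIntegrable (fun u => u ^ m * √(2 * (h - potential n u))) volume x y :=
  (by fun_prop : Continuous fun u => u ^ m * √(2 * (h - potential n u))).intervalIntegrable x y

theorem integral_mul_sqrt_eq_zero {f g : ℝ → ℝ} {x y : ℝ} (hxy : x ≤ y)
    (hg : ∀ u ∈ Icc x y, g u ≤ 0) : ∫ u in x..y, f u * √(g u) = 0 := by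
  rw [← integral_zero (a := x) (b := y) (μ := volume)]
  refine integral_congr fun u hu => ?_
  rw [uIcc_of_le hxy] at hu
  simp [Real.sqrt_eq_zero'.2 (hg u hu)]

section Oval

variable {n : ℕ} {a x y h : ℝ}

theorem potential_lt_of_mem_Ioo (hn : n ≠ 0) (ha : 0 ≤ a) (han : a ^ n = n + 1)
    (hx : x ∈ Icc 0 a) (hxh : potential n x = h) (hyh : potential n y = h)
    {u : ℝ} (hu : u ∈ Ioo x y) : potential n u < h := by
  rcases le_or_gt u a with hua | hua
  · exact hxh ▸ potential_strictAntiOn hn han hx ⟨hx.1.trans hu.1.le, hua⟩ hu.1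
  · exact hyh ▸ potential_strictMonoOn hn ha han hua.le (hua.le.trans hu.2.le) hu.2

theorem abelIntegral_pos (hn : n ≠ 0) (han : a ^ n = n + 1) (hx0 : 0 ≤ x) (hxa : x < a)
    (hay : a < y) (hxh : potential n x = h) (hyh : potential n y = h) :
    0 < abelIntegral n 0 x y h := by
  refine mul_pos two_pos (intervalIntegral_pos_of_pos_on
    (intervalIntegrable_abelIntegrand n 0 h x y) (fun u hu => ?_) (hxa.trans hay))
  have := potential_lt_of_mem_Ioo hn (hx0.trans hxa.le) han ⟨hx0, hxa.le⟩ hxh hyh hu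
  rw [pow_zero, one_mul, Real.sqrt_pos]
  linarith

theorem div_abelIntegral_mem_Icc (hn : n ≠ 0) (han : a ^ n = n + 1) (hx0 : 0 ≤ x) (hxa : x < a)
    (hay : a < y) (hxh : potential n x = h) (hyh : potential n y = h) (m : ℕ) :
    abelIntegral n m x y h / abelIntegral n 0 x y h ∈ Icc (x ^ m) (y ^ m) := by
  have hpos := abelIntegral_pos hn han hx0 hxa hay hxh hyh
  simp only [abelIntegral, pow_zero, one_mul, mul_div_mul_left _ _ (two_ne_zero' ℝ)] at hpos ⊢
  exact div_integral_pow_mul_mem_Icc hx0 (hxa.trans hay).le (fun u _ => Real.sqrt_nonneg _)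
    ((by fun_prop : Continuous fun u => √(2 * (h - potential n u))).intervalIntegrable _ _)
    (pos_of_mul_pos_right hpos zero_le_two) m

theorem abelIntegral_eq_of_le (hn : n ≠ 0) (ha : 0 ≤ a) (han : a ^ n = n + 1) {x' y' : ℝ}
    (hx' : 0 ≤ x') (hx'x : x' ≤ x) (hxa : x ≤ a) (hay : a ≤ y) (hyy' : y ≤ y')
    (hxh : potential n x = h) (hyh : potential n y = h) (m : ℕ) :
    abelIntegral n m x y h = abelIntegral n m x' y' h := by
  have hint := intervalIntegrable_abelIntegrand n m h
  have hleft : ∫ u in x'..x, u ^ m * √(2 * (h - potential n u)) = 0 := by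
    refine integral_mul_sqrt_eq_zero hx'x fun u hu => ?_
    have := hxh ▸ (potential_strictAntiOn hn han).antitoneOn ⟨hx'.trans hu.1, hu.2.trans hxa⟩
      ⟨hx'.trans hx'x, hxa⟩ hu.2
    linarith
  have hright : ∫ u in y..y', u ^ m * √(2 * (h - potential n u)) = 0 := by
    refine integral_mul_sqrt_eq_zero hyy' fun u hu => ?_
    have := hyh ▸ (potential_strictMonoOn hn ha han).monotoneOn hay (hay.trans hu.1) hu.1
    linarith
  rw [abelIntegral, abelIntegral, ← integral_add_adjacent_intervals (hint x' x) (hint x y'),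
    ← integral_add_adjacent_intervals (hint x y) (hint y y'), hleft, hright, zero_add, add_zero]

end Oval

theorem abelIntegral_self_eq_mul {n : ℕ} (hn : n ≠ 0) {B : ℝ} (hB : 0 < B)
    (hBn : B ^ n = (n + 1) * (n + 2) / 2) :
    abelIntegral n n 0 B 0 = 2 * (n + 1) * (n + 2) / (3 * n + 4) * abelIntegral n 0 0 B 0 := by
  have hsubst : ∀ m : ℕ, abelIntegral n m 0 B 0
      = 2 * ∫ u in (0 : ℝ)..B, u ^ (m + 1) * √(1 - u ^ n / B ^ n) := fun m => by
    refine congrArg (2 * ·) (integral_congr fun u hu => ?_)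
    rw [uIcc_of_le hB.le] at hu
    rw [zero_sub, ← neg_mul_comm, neg_two_mul_potential hBn, Real.sqrt_mul (sq_nonneg u),
      Real.sqrt_sq hu.1, pow_succ]
    ring
  rw [hsubst, hsubst, integral_pow_succ_mul_sqrt_one_sub hn hB]
  simp only [zero_add, pow_one]
  rw [hBn]
  ring

section Limits

variable {n : ℕ} {a : ℝ} {α β : ℝ → ℝ}

theorem tendsto_abelIntegral_div_nhdsGT (hn : n ≠ 0) (ha : 0 < a) (han : a ^ n = n + 1)
    (hα : ∀ h ∈ Ioo (potential n a) 0, α h ∈ Ioo 0 a ∧ potential n (α h) = h)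
    (hβ : ∀ h ∈ Ioo (potential n a) 0, a < β h ∧ potential n (β h) = h) :
    Tendsto (fun h => abelIntegral n n (α h) (β h) h / abelIntegral n 0 (α h) (β h) h)
      (𝓝[>] (potential n a)) (𝓝 (n + 1)) := by
  have hoval : ∀ᶠ h in 𝓝[>] (potential n a), h ∈ Ioo (potential n a) 0 :=
    Ioo_mem_nhdsGT (potential_neg_of_pow_eq hn ha han)
  have hid : Tendsto (fun h => h) (𝓝[>] (potential n a)) (𝓝 (potential n a)) :=
    tendsto_nhdsWithin_of_tendsto_nhds tendsto_id
  have hαa : Tendsto α (𝓝[>] (potential n a)) (𝓝 a) :=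
    (potential_strictAntiOn hn han).tendsto_of_tendsto_comp ordConnected_Icc ⟨ha.le, le_rfl⟩
      (hoval.mono fun h hh => Ioo_subset_Icc_self (hα h hh).1)
      (hid.congr' (hoval.mono fun h hh => (hα h hh).2.symm))
  have hβa : Tendsto β (𝓝[>] (potential n a)) (𝓝 a) :=
    (potential_strictMonoOn hn ha.le han).tendsto_of_tendsto_comp ordConnected_Ici self_mem_Ici
      (hoval.mono fun h hh => (hβ h hh).1.le)
      (hid.congr' (hoval.mono fun h hh => (hβ h hh).2.symm))
  have hbounds : ∀ᶠ h in 𝓝[>] (potential n a),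
      abelIntegral n n (α h) (β h) h / abelIntegral n 0 (α h) (β h) h
        ∈ Icc (α h ^ n) (β h ^ n) := by
    filter_upwards [hoval] with h hh
    obtain ⟨⟨hα0, hαa⟩, hαh⟩ := hα h hh
    exact div_abelIntegral_mem_Icc hn han hα0.le hαa (hβ h hh).1 hαh (hβ h hh).2 n
  rw [← han]
  exact tendsto_of_tendsto_of_tendsto_of_le_of_le' (hαa.pow n) (hβa.pow n)
    (hbounds.mono fun _ hh => hh.1) (hbounds.mono fun _ hh => hh.2)

theorem tendsto_abelIntegral_div_nhdsLT (hn : n ≠ 0) (ha : 0 < a) (han : a ^ n = n + 1)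
    {B p : ℝ} (hB : 0 < B) (hBn : B ^ n = (n + 1) * (n + 2) / 2) (hp : p < 0)
    (hα : ∀ h ∈ Ioo p 0, α h ∈ Ioo 0 a ∧ potential n (α h) = h)
    (hβ : ∀ h ∈ Ioo p 0, β h ∈ Ioo a B ∧ potential n (β h) = h) :
    Tendsto (fun h => abelIntegral n n (α h) (β h) h / abelIntegral n 0 (α h) (β h) h)
      (𝓝[<] 0) (𝓝 (2 * (n + 1) * (n + 2) / (3 * n + 4))) := by
  have haB : a < B := by
    refine lt_of_pow_lt_pow_left₀ n hB.le ?_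
    rw [han, hBn]
    have : (0 : ℝ) < n := by positivity
    nlinarith
  -- the integrand vanishes on `[0, B]` outside the oval, so near `0` each `A m` is continuous
  have hlim : ∀ m, Tendsto (fun h => abelIntegral n m (α h) (β h) h) (𝓝[<] 0)
      (𝓝 (abelIntegral n m 0 B 0)) := by
    intro m
    refine (tendsto_nhdsWithin_of_tendsto_nhds
      ((continuous_abelIntegral n m 0 B).tendsto 0)).congr' ?_
    filter_upwards [Ioo_mem_nhdsLT hp] with h hh
    obtain ⟨⟨hα0, hαa⟩, hαh⟩ := hα h hh
    obtain ⟨⟨haβ, hβB⟩, hβh⟩ := hβ h hh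
    exact (abelIntegral_eq_of_le hn ha.le han le_rfl hα0.le hαa.le haβ.le hβB.le hαh hβh m).symm
  have hpos := abelIntegral_pos hn han le_rfl ha haB (potential_zero n)
    (potential_eq_zero_of_pow_eq hB.ne' hBn)
  have := (hlim n).div (hlim 0) hpos.ne'
  rwa [abelIntegral_self_eq_mul hn hB hBn, mul_div_cancel_right₀ _ hpos.ne'] at this

end Limits

theorem stmt_18 (n : ℕ) (hn : 1 ≤ n) (Φ : ℝ → ℝ)
    (hΦ : ∀ u : ℝ, Φ u = -u ^ 2 / 2 + u ^ (n + 2) / (((n : ℝ) + 1) * ((n : ℝ) + 2)))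
    (a B p₁ : ℝ) (ha : a = ((n : ℝ) + 1) ^ ((1 : ℝ) / n))
    (hB : B = (((n : ℝ) + 1) * ((n : ℝ) + 2) / 2) ^ ((1 : ℝ) / n))
    (hp₁ : p₁ = -(n : ℝ) * ((n : ℝ) + 1) ^ ((2 : ℝ) / n) / (2 * ((n : ℝ) + 2)))
    (α β : ℝ → ℝ)
    (hα : ∀ h ∈ Set.Ioo p₁ (0 : ℝ), α h ∈ Set.Ioo (0 : ℝ) a ∧ Φ (α h) = h)
    (hβ : ∀ h ∈ Set.Ioo p₁ (0 : ℝ), β h ∈ Set.Ioo a B ∧ Φ (β h) = h)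
    (A : ℕ → ℝ → ℝ)
    (hA : ∀ (m : ℕ) (h : ℝ),
      A m h = 2 * ∫ u in (α h)..(β h), u ^ m * Real.sqrt (2 * (h - Φ u))) :
    Filter.Tendsto (fun h => A n h / A 0 h) (nhdsWithin p₁ (Set.Ioi p₁))
      (nhds ((n : ℝ) + 1)) ∧
    Filter.Tendsto (fun h => A n h / A 0 h) (nhdsWithin 0 (Set.Iio 0))
      (nhds (2 * ((n : ℝ) + 1) * ((n : ℝ) + 2) / (3 * (n : ℝ) + 4))) := by
  obtain rfl : Φ = potential n := funext hΦ
  have hn0 : n ≠ 0 := by omega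
  have ha0 : 0 < a := ha ▸ by positivity
  have hB0 : 0 < B := hB ▸ by positivity
  have han : a ^ n = n + 1 := by
    rw [ha, one_div, Real.rpow_inv_natCast_pow (by positivity) hn0]
  have hBn : B ^ n = (n + 1) * (n + 2) / 2 := by
    rw [hB, one_div, Real.rpow_inv_natCast_pow (by positivity) hn0]
  obtain rfl : p₁ = potential n a := by
    rw [hp₁, potential_eq_of_pow_eq han, ha, ← Real.rpow_natCast, ← Real.rpow_mul (by positivity)]
    ring_nf
  have hratio : (fun h => A n h / A 0 h)
      = fun h => abelIntegral n n (α h) (β h) h / abelIntegral n 0 (α h) (β h) h := by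
    simp only [hA, abelIntegral]
  rw [hratio]
  exact ⟨tendsto_abelIntegral_div_nhdsGT hn0 ha0 han hα fun h hh => ⟨(hβ h hh).1.1, (hβ h hh).2⟩,
    tendsto_abelIntegral_div_nhdsLT hn0 ha0 han hB0 hBn (potential_neg_of_pow_eq hn0 ha0 han) hα hβ⟩
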